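/- Let G be a connected finite simple graph and S ⊆ V(G) with α_G(S) ≤ κ_G(S) + 1. Then G has a path covering S (i.e., a 2-ended tree covering S). -/

import Mathlib

/-!
Take a path `L` through as many vertices of `S` as possible, and suppose it misses some `s ∈ S`.
Trimming `L`, we may assume that both of its ends `u` and `t` lie in `S`. Each of `κ(s,t)`
internally disjoint `s`–`t` paths first meets `L` at some `aᵢ`, and `aᵢ ≠ t` (else `L` would
extend to `s`); let `bᵢ` be the first vertex of `S` after `aᵢ` on `L`. If two of `s, u, b₁, …` were adjacent or two `bᵢ` were equal, one
could reroute `L` through `s` along at most two of these paths, skipping only non-`S` vertices of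
`L`, against the choice of `L`. Hence `{s, u, b₁, …}` is an independent subset of `S` of size
`κ(s,t) + 2 ≥ κ(S) + 2`, contradicting `α(S) ≤ κ(S) + 1`.
-/

open SimpleGraph Set

variable {V : Type*}

/-- The independence number of `S` in `G`: the maximum cardinality of a subset of `S`
that is independent in `G`. -/
noncomputable def indepNumOn (G : SimpleGraph V) (S : Set V) : ℕ :=
  sSup {n | ∃ I : Set V, I ⊆ S ∧ I.Pairwise (fun a b => ¬ G.Adj a b) ∧ I.ncard = n}

/-- `I` is a maximum independent subset of `S` in `G`. -/
def MaxIndepOn (G : SimpleGraph V) (S : Set V) (I : Set V) : Prop :=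
  I ⊆ S ∧ I.Pairwise (fun a b => ¬ G.Adj a b) ∧ I.ncard = indepNumOn G S

/-- Two `x`–`y` walks are internally disjoint if they share only `x` and `y`. -/
def InternallyDisjoint (G : SimpleGraph V) {x y : V} (p q : G.Walk x y) : Prop :=
  ∀ v, v ∈ p.support → v ∈ q.support → v = x ∨ v = y

/-- Local connectivity `κ_G(x,y)`: maximum number of pairwise internally disjoint
`x`–`y` paths in `G`. -/
noncomputable def localConn (G : SimpleGraph V) (x y : V) : ℕ :=
  sSup {n | ∃ P : Set (G.Path x y),
    P.Pairwise (fun p q => InternallyDisjoint G p.1 q.1) ∧ P.ncard = n}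

/-- `κ_G(S)`: the minimum of local connectivities over distinct pairs in `S`,
`+∞` if `S` has at most one element. -/
noncomputable def setConn (G : SimpleGraph V) (S : Set V) : ℕ∞ :=
  ⨅ x ∈ S, ⨅ y ∈ S, ⨅ _ : x ≠ y, (localConn G x y : ℕ∞)

/-- Vertex connectivity `κ(G)`: the maximum `k` such that `G` has more than `k`
vertices and removing fewer than `k` vertices always leaves a connected graph. -/
noncomputable def vertexConn (G : SimpleGraph V) [Fintype V] : ℕ :=
  sSup {k | k < Fintype.card V ∧ ∀ X : Finset V, X.card < k →
    (G.induce ((↑X : Set V)ᶜ)).Connected}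

/-- The set of leaves (vertices of degree one) of a subgraph. -/
def subLeaves {G : SimpleGraph V} (T : G.Subgraph) : Set V :=
  {v | v ∈ T.verts ∧ (T.neighborSet v).ncard = 1}

/-- The set of branch vertices (vertices of degree at least three) of a subgraph. -/
def subBranches {G : SimpleGraph V} (T : G.Subgraph) : Set V :=
  {v | v ∈ T.verts ∧ 3 ≤ (T.neighborSet v).ncard}


namespace List

variable {α : Type*} {l L X Z X' Z' : List α} {a a' : α}

theorem exists_eq_append_cons_of_exists {p : α → Prop} (h : ∃ x ∈ l, p x) :
    ∃ X b Z, l = X ++ b :: Z ∧ p b ∧ ∀ x ∈ X, ¬ p x := by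
  classical
  obtain ⟨b, hb⟩ := Option.isSome_iff_exists.1 (find?_isSome (p := fun x => decide (p x)).2
    (by simpa using h))
  obtain ⟨hpb, X, Z, rfl, hX⟩ := find?_eq_some_iff_append.1 hb
  exact ⟨X, b, Z, rfl, by simpa using hpb, fun x hx => by simpa using hX x hx⟩

theorem exists_infix_head?_getLast?_mem {S : Set α} (h : ∃ x ∈ L, x ∈ S) :
    ∃ L', L' <:+: L ∧ (∃ x ∈ S, L'.head? = some x) ∧ (∃ y ∈ S, L'.getLast? = some y) ∧
      ∀ x ∈ L, x ∈ S → x ∈ L' := by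
  obtain ⟨X, x, R, rfl, hxS, hX⟩ := exists_eq_append_cons_of_exists h
  obtain ⟨Y, y, Q, hYQ, hyS, hY⟩ := exists_eq_append_cons_of_exists (p := (· ∈ S))
    (l := (x :: R).reverse) ⟨x, by simp, hxS⟩
  have hxR : x :: R = (y :: Q).reverse ++ Y.reverse := by
    rw [← reverse_reverse (x :: R), hYQ, reverse_append]
  refine ⟨(y :: Q).reverse, ⟨X, Y.reverse, by rw [append_assoc, ← hxR]⟩, ⟨x, hxS, ?_⟩,
    ⟨y, hyS, by simp⟩, fun z hz hzS => ?_⟩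
  · have := congrArg head? hxR
    rwa [head?_append_of_ne_nil _ (by simp), head?_cons, eq_comm] at this
  · have hz' : z ∈ x :: R := (mem_append.1 hz).resolve_left fun h => hX z h hzS
    rw [hxR, mem_append] at hz'
    exact hz'.resolve_right fun h => hY z (mem_reverse.1 h) hzS

theorem exists_eq_append_cons_append_cons_of_getLast? {S : Set α} {y : α} (ha : a ∈ L)
    (hy : L.getLast? = some y) (hyS : y ∈ S) (hay : a ≠ y) :
    ∃ X M b W, L = X ++ a :: (M ++ b :: W) ∧ b ∈ S ∧ ∀ x ∈ M, x ∉ S := by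
  obtain ⟨X, Z, rfl⟩ := append_of_mem ha
  have hZ : Z ≠ [] := by rintro rfl; simp [hay] at hy
  have hyZ : y ∈ Z := by
    rw [show X ++ a :: Z = (X ++ [a]) ++ Z by simp, getLast?_append_of_ne_nil _ hZ] at hy
    exact mem_of_mem_getLast? hy
  obtain ⟨M, b, W, rfl, hbS, hM⟩ := exists_eq_append_cons_of_exists ⟨y, hyZ, hyS⟩
  exact ⟨X, M, b, W, rfl, hbS, hM⟩

theorem Nodup.mem_or_mem_of_eq_append_cons (hL : L.Nodup) (h : L = X ++ a :: Z)
    (h' : L = X' ++ a' :: Z') (hne : a ≠ a') : a' ∈ Z ∨ a ∈ Z' := by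
  have ha' : a' ∈ X ++ a :: Z := h ▸ h' ▸ mem_append_right _ mem_cons_self
  rcases mem_append.1 ha' with hX | hZ
  · obtain ⟨X₁, X₂, rfl⟩ := append_of_mem hX
    right
    have hnd := h ▸ hL
    simp only [append_assoc, cons_append, nodup_append, nodup_cons] at hnd
    have : X₁ ++ a' :: (X₂ ++ a :: Z) = X' ++ a' :: Z' := by rw [← h', h]; simp
    rw [append_cons_inj_of_notMem (fun h => hnd.2.2 _ h _ mem_cons_self rfl) hnd.2.1.1] at this
    simp [← this.2.2]
  · exact Or.inl ((mem_cons.1 hZ).resolve_left (Ne.symm hne))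

end List

namespace SimpleGraph

def IsPathList (G : SimpleGraph V) (l : List V) : Prop :=
  l.IsChain G.Adj ∧ l.Nodup

variable {G : SimpleGraph V}

namespace IsPathList

variable {l l₁ l₂ : List V} {x : V}

theorem reverse (h : G.IsPathList l) : G.IsPathList l.reverse :=
  ⟨List.isChain_reverse.2 (h.1.imp fun _ _ hxy => hxy.symm), List.nodup_reverse.2 h.2⟩

theorem of_infix (h : G.IsPathList l) (hl : l₁ <:+: l) : G.IsPathList l₁ :=
  ⟨h.1.infix hl, h.2.sublist hl.sublist⟩

theorem append (h₁ : G.IsPathList l₁) (h₂ : G.IsPathList l₂) (hd : l₁.Disjoint l₂)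
    (hadj : ∀ x ∈ l₁.getLast?, ∀ y ∈ l₂.head?, G.Adj x y) : G.IsPathList (l₁ ++ l₂) :=
  ⟨List.isChain_append.2 ⟨h₁.1, h₂.1, hadj⟩, List.nodup_append'.2 ⟨h₁.2, h₂.2, hd⟩⟩

theorem append_cons (h₁ : G.IsPathList (l₁ ++ [x])) (h₂ : G.IsPathList (x :: l₂))
    (hd : l₁.Disjoint l₂) : G.IsPathList (l₁ ++ x :: l₂) := by
  refine ⟨by simpa using h₁.1.append_overlap (l₃ := l₂) h₂.1 (List.cons_ne_nil _ _), ?_⟩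
  have := h₁.2; have := h₂.2
  simp only [List.nodup_append, List.nodup_cons, List.mem_cons] at *
  grind [List.Disjoint]

theorem exists_walk (h : G.IsPathList l) (hne : l ≠ []) :
    ∃ (u v : V) (p : G.Walk u v), p.IsPath ∧ p.support = l :=
  ⟨_, _, Walk.ofSupport l hne h.1, by rw [Walk.isPath_def, Walk.support_ofSupport]; exact h.2,
    Walk.support_ofSupport _ _⟩

theorem exists_isPath_subset_support [Nonempty V] {S : Set V} (hL : G.IsPathList l)
    (hS : ∀ x ∈ S, x ∈ l) : ∃ (u v : V) (p : G.Walk u v), p.IsPath ∧ S ⊆ {x | x ∈ p.support} := by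
  cases l with
  | nil =>
    exact ⟨Classical.arbitrary V, _, .nil, .nil, fun x hx => absurd (hS x hx) List.not_mem_nil⟩
  | cons x l =>
    obtain ⟨u, v, p, hp, hsupp⟩ := hL.exists_walk (List.cons_ne_nil x l)
    exact ⟨u, v, p, hp, fun y hy => hsupp ▸ hS y hy⟩

end IsPathList

theorem Walk.IsPath.isPathList {u v : V} {p : G.Walk u v} (hp : p.IsPath) :
    G.IsPathList p.support :=
  ⟨p.isChain_adj_support, hp.support_nodup⟩

structure IsFanPath (G : SimpleGraph V) (L : List V) (s : V) (P : List V) (a : V) : Prop where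
  isPathList : G.IsPathList (s :: P ++ [a])
  mem : a ∈ L
  disjoint : P.Disjoint L

theorem Walk.IsPath.exists_isFanPath {L : List V} {s t : V} {q : G.Walk s t} (hq : q.IsPath)
    (hs : s ∉ L) (ht : t ∈ L) :
    ∃ P a R, q.support = s :: (P ++ a :: R) ∧ IsFanPath G L s P a := by
  have htail : t ∈ q.support.tail := by
    have := q.end_mem_support
    rw [← q.cons_tail_support, List.mem_cons] at this
    exact this.resolve_left fun hts => hs (hts ▸ ht)
  obtain ⟨P, a, R, hPR, haL, hP⟩ := List.exists_eq_append_cons_of_exists ⟨t, htail, ht⟩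
  have hsupp : q.support = s :: (P ++ a :: R) := by rw [← q.cons_tail_support, hPR]
  exact ⟨P, a, R, hsupp, hq.isPathList.of_infix ⟨[], R, by simp [hsupp]⟩, haL,
    fun x hxP hxL => hP x hxP hxL⟩

def CannotAbsorb (G : SimpleGraph V) (S : Set V) (L : List V) (s : V) : Prop :=
  ∀ l, G.IsPathList l → (∀ x ∈ L, x ∈ S → x ∈ l) → s ∉ l

theorem exists_isPathList_cannotAbsorb [Finite V] (G : SimpleGraph V) (S : Set V) :
    ∃ L, G.IsPathList L ∧ ∀ s ∈ S, s ∉ L → CannotAbsorb G S L s := by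
  have : Fintype V := Fintype.ofFinite V
  have hfin : {l | G.IsPathList l}.Finite :=
    (List.finite_length_le V (Fintype.card V)).subset fun l hl => hl.2.length_le_card
  obtain ⟨L, hL, hmax⟩ := Set.exists_max_image _ (fun l => (S ∩ {x | x ∈ l}).ncard) hfin
    ⟨[], List.isChain_nil, List.nodup_nil⟩
  refine ⟨L, hL, fun s hsS hsL l hl hcov hsl => ?_⟩
  have hsub : insert s (S ∩ {x | x ∈ L}) ⊆ S ∩ {x | x ∈ l} := by
    rintro x (rfl | ⟨hxS, hxL⟩)
    exacts [⟨hsS, hsl⟩, ⟨hxS, hcov x hxL hxS⟩]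
  have := Set.ncard_le_ncard hsub
  rw [Set.ncard_insert_of_notMem fun h => hsL h.2] at this
  exact absurd (hmax l hl) (by omega)

namespace CannotAbsorb

variable {S : Set V} {L L' P P' X M W X' M' W' Z R : List V} {s a a' b b' u : V}

theorem mono (h : CannotAbsorb G S L s) (hLL' : ∀ x ∈ L, x ∈ S → x ∈ L') :
    CannotAbsorb G S L' s :=
  fun l hl hcov => h l hl fun x hx hxS => hcov x (hLL' x hx hxS) hxS

theorem not_mem_getLast? (h : CannotAbsorb G S L s) (hL : G.IsPathList L) (hs : s ∉ L)
    (hF : IsFanPath G L s P a) : a ∉ L.getLast? := by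
  intro ha
  obtain ⟨X, rfl⟩ := List.getLast?_eq_some_iff.1 ha
  refine h (X ++ a :: (P.reverse ++ [s])) (hL.append_cons ?_ ?_) ?_ (by simp)
  · simpa using hF.isPathList.reverse
  · have := hF.disjoint
    simp_all only [List.Disjoint, List.mem_append, List.mem_cons, List.mem_reverse]
    grind
  · intro x hx _
    simp only [List.mem_append, List.mem_cons] at hx ⊢
    tauto

theorem not_adj_of_head? (h : CannotAbsorb G S L s) (hL : G.IsPathList L) (hs : s ∉ L)
    (hu : L.head? = some u) : ¬ G.Adj s u := by
  intro hadj
  have huL : u ∈ L := List.mem_of_mem_head? hu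
  have hsu : s ≠ u := fun hsu => hs (hsu ▸ huL)
  refine (h.mono (L' := L.reverse) fun x hx _ => List.mem_reverse.2 hx).not_mem_getLast?
    hL.reverse (by simpa) (P := []) ⟨⟨by simpa using hadj, by simpa using hsu⟩, by simpa, by simp⟩
    (by simpa)

theorem false_of_isFanPath_of_isFanPath (h : CannotAbsorb G S L s) (hL : G.IsPathList L)
    (hs : s ∉ L) (hdec : L = X ++ a :: Z) (hF : IsFanPath G L s P a)
    (hF' : IsFanPath G L s P' a') (hPP' : P.Disjoint P') (hR : G.IsPathList (a' :: R))
    (hRZ : ∀ x ∈ a' :: R, x ∈ Z) (hcov : ∀ x ∈ Z, x ∈ S → x ∈ a' :: R) : False := by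
  have hLnd := hL.2
  have hsP := (List.nodup_cons.1 hF.isPathList.2).1
  have hsP' := (List.nodup_cons.1 hF'.isPathList.2).1
  have hPL := hF.disjoint
  have hP'L := hF'.disjoint
  subst hdec
  simp only [List.nodup_append, List.nodup_cons, List.Disjoint, List.mem_append, List.mem_cons]
    at hLnd hsP hsP' hPL hP'L hPP' hs hRZ
  have hXa : G.IsPathList (X ++ [a]) := hL.of_infix ⟨[], Z, by simp⟩
  have hback : G.IsPathList ((a :: P.reverse) ++ [s]) := by
    simpa using hF.isPathList.reverse
  have hout : G.IsPathList (s :: (P' ++ a' :: R)) :=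
    hF'.isPathList.append_cons (l₁ := s :: P') hR (by grind [List.Disjoint])
  have hdetour : G.IsPathList (a :: (P.reverse ++ s :: (P' ++ a' :: R))) :=
    hback.append_cons hout (by simp only [List.Disjoint]; grind)
  refine h (X ++ a :: (P.reverse ++ s :: (P' ++ a' :: R)))
    (hXa.append_cons hdetour (by simp only [List.Disjoint]; grind)) ?_ (by simp)
  intro x hx hxS
  simp only [List.mem_append, List.mem_cons] at hx ⊢
  grind

theorem not_adj_of_isFanPath (h : CannotAbsorb G S L s) (hL : G.IsPathList L) (hs : s ∉ L)
    (hdec : L = X ++ a :: (M ++ b :: W)) (hM : ∀ x ∈ M, x ∉ S) (hF : IsFanPath G L s P a) :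
    ¬ G.Adj s b := by
  intro hadj
  have hbL : b ∈ L := by simp [hdec]
  have hsb : s ≠ b := fun h => hs (h ▸ hbL)
  refine h.false_of_isFanPath_of_isFanPath hL hs hdec hF (P' := [])
    ⟨⟨by simpa using hadj, by simpa using hsb⟩, hbL, by simp⟩ (by simp) (R := W)
    (hL.of_infix ⟨X ++ a :: M, [], by simp [hdec]⟩) (by simp; tauto) ?_
  intro x hx hxS
  simp only [List.mem_append, List.mem_cons] at hx ⊢
  grind

theorem not_adj_head?_of_isFanPath (h : CannotAbsorb G S L s) (hL : G.IsPathList L)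
    (hs : s ∉ L) (hdec : L = X ++ a :: (M ++ b :: W)) (hM : ∀ x ∈ M, x ∉ S)
    (hF : IsFanPath G L s P a) (hu : L.head? = some u) : ¬ G.Adj u b := by
  intro hadj
  have hLnd := hL.2
  have hsP := (List.nodup_cons.1 hF.isPathList.2).1
  have hPL := hF.disjoint
  subst hdec
  simp only [List.nodup_append, List.nodup_cons, List.Disjoint, List.mem_append, List.mem_cons]
    at hLnd hsP hPL hs
  have hXa : G.IsPathList (X ++ [a]) := hL.of_infix ⟨[], M ++ b :: W, by simp⟩
  have hbW : G.IsPathList (b :: W) := hL.of_infix ⟨X ++ a :: M, [], by simp⟩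
  have hback : G.IsPathList (a :: (X.reverse ++ b :: W)) := by
    have := hXa.reverse.append hbW (by simp only [List.Disjoint]; grind) (by
      rw [List.getLast?_reverse]
      simp only [List.head?_append, List.head?_cons] at hu ⊢
      simpa [hu] using hadj)
    simpa using this
  refine h (s :: (P ++ a :: (X.reverse ++ b :: W)))
    (hF.isPathList.append_cons (l₁ := s :: P) hback (by simp only [List.Disjoint]; grind)) ?_
    (by simp)
  intro x hx hxS
  simp only [List.mem_append, List.mem_cons, List.mem_reverse] at hx ⊢
  grind

theorem not_mem_of_isFanPath (h : CannotAbsorb G S L s) (hL : G.IsPathList L) (hs : s ∉ L)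
    (hdec : L = X ++ a :: (M ++ b :: W)) (hM : ∀ x ∈ M, x ∉ S) (hF : IsFanPath G L s P a)
    (hF' : IsFanPath G L s P' a') (hPP' : P.Disjoint P') : a' ∉ M := by
  intro ha'
  obtain ⟨M₁, M₂, rfl⟩ := List.append_of_mem ha'
  refine h.false_of_isFanPath_of_isFanPath hL hs hdec hF hF' hPP' (R := M₂ ++ b :: W)
    (hL.of_infix ⟨X ++ a :: M₁, [], by simp [hdec]⟩) (by simp; tauto) ?_
  intro x hx hxS
  simp only [List.mem_append, List.mem_cons] at hx ⊢ hM
  grind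

theorem ne_and_not_adj_of_mem (h : CannotAbsorb G S L s) (hL : G.IsPathList L)
    (hs : s ∉ L) (hdec : L = X ++ a :: (M ++ b :: W)) (hM : ∀ x ∈ M, x ∉ S)
    (hdec' : L = X' ++ a' :: (M' ++ b' :: W')) (hM' : ∀ x ∈ M', x ∉ S)
    (hF : IsFanPath G L s P a) (hF' : IsFanPath G L s P' a') (hPP' : P.Disjoint P')
    (ha' : a' ∈ b :: W) : b ≠ b' ∧ ¬ G.Adj b b' := by
  obtain ⟨Y, Z', hYZ⟩ := List.append_of_mem ha'
  have hLnd := hL.2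
  have hZ' : Z' = M' ++ b' :: W' := by
    rw [hdec', List.nodup_append, List.nodup_cons] at hLnd
    have : X' ++ a' :: (M' ++ b' :: W') = (X ++ a :: (M ++ Y)) ++ a' :: Z' := by
      rw [← hdec', hdec, hYZ]; simp
    rw [List.append_cons_inj_of_notMem (fun h => hLnd.2.2 _ h _ List.mem_cons_self rfl)
        hLnd.2.1.1] at this
    exact this.2.2.symm
  subst hZ' hdec
  simp only [hYZ, List.nodup_append, List.nodup_cons, List.mem_append, List.mem_cons] at hLnd
  have hbY : b ∈ Y ++ [a'] := by cases Y <;> simp_all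
  refine ⟨by simp only [List.mem_append, List.mem_cons] at hbY; grind, fun hadj => ?_⟩
  have hYa' : G.IsPathList (Y ++ [a']) := hL.of_infix ⟨X ++ a :: M, M' ++ b' :: W', by simp [hYZ]⟩
  have hbW' : G.IsPathList (b' :: W') :=
    hL.of_infix ⟨X ++ a :: (M ++ (Y ++ a' :: M')), [], by simp [hYZ]⟩
  -- from `a'` back along `L` to `b`, then across the edge `b b'`
  have hR : G.IsPathList (a' :: (Y.reverse ++ b' :: W')) := by
    have := hYa'.reverse.append hbW' (by simp only [List.Disjoint]; grind) (by
      rw [List.getLast?_reverse]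
      cases Y <;> simp_all)
    simpa using this
  refine h.false_of_isFanPath_of_isFanPath hL hs rfl hF hF' hPP' hR (by simp [hYZ]; tauto) ?_
  intro x hx hxS
  simp only [hYZ, List.mem_append, List.mem_cons, List.mem_reverse] at hx ⊢ hM hM'
  grind

theorem ne_and_not_adj (h : CannotAbsorb G S L s) (hL : G.IsPathList L)
    (hs : s ∉ L) (hdec : L = X ++ a :: (M ++ b :: W)) (hM : ∀ x ∈ M, x ∉ S)
    (hdec' : L = X' ++ a' :: (M' ++ b' :: W')) (hM' : ∀ x ∈ M', x ∉ S)
    (hF : IsFanPath G L s P a) (hF' : IsFanPath G L s P' a') (hPP' : P.Disjoint P')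
    (haa' : a ≠ a') : b ≠ b' ∧ ¬ G.Adj b b' := by
  rcases hL.2.mem_or_mem_of_eq_append_cons hdec hdec' haa' with ha' | ha
  · exact h.ne_and_not_adj_of_mem hL hs hdec hM hdec' hM' hF hF' hPP'
      ((List.mem_append.1 ha').resolve_left (h.not_mem_of_isFanPath hL hs hdec hM hF hF' hPP'))
  · have := h.ne_and_not_adj_of_mem hL hs hdec' hM' hdec hM hF' hF hPP'.symm
      ((List.mem_append.1 ha).resolve_left
        (h.not_mem_of_isFanPath hL hs hdec' hM' hF' hF hPP'.symm))
    exact ⟨this.1.symm, fun hadj => this.2 hadj.symm⟩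

theorem exists_indep_ncard_eq {ι : Type*} [Finite ι] (h : CannotAbsorb G S L s)
    (hL : G.IsPathList L) (hs : s ∉ L) (hsS : s ∈ S) {t : V} (hu : L.head? = some u)
    (huS : u ∈ S) (ht : L.getLast? = some t) (htS : t ∈ S) {P : ι → List V} {a : ι → V}
    (hF : ∀ i, IsFanPath G L s (P i) (a i)) (hP : Pairwise fun i j => (P i).Disjoint (P j))
    (ha : Function.Injective a) :
    ∃ I ⊆ S, I.Pairwise (fun x y => ¬ G.Adj x y) ∧ I.ncard = Nat.card ι + 2 := by
  have hnext i : ∃ X M b W, L = X ++ a i :: (M ++ b :: W) ∧ b ∈ S ∧ ∀ x ∈ M, x ∉ S :=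
    List.exists_eq_append_cons_append_cons_of_getLast? (hF i).mem ht htS
      fun hat => h.not_mem_getLast? hL hs (hF i) (hat ▸ ht)
  choose X M b W hdec hbS hM using hnext
  have hpair : Pairwise fun i j => b i ≠ b j ∧ ¬ G.Adj (b i) (b j) := fun i j hij =>
    h.ne_and_not_adj hL hs (hdec i) (hM i) (hdec j) (hM j) (hF i) (hF j) (hP hij) (ha.ne hij)
  have hbL i : b i ∈ L := by simp [hdec i]
  have huL : u ∈ L := List.mem_of_mem_head? hu
  have hub i : u ≠ b i := by
    have hnd := (hdec i) ▸ hL.2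
    have hu' := (hdec i) ▸ hu
    cases hX : X i <;> simp_all [List.nodup_append]
  have hsymm {x y : V} (hxy : ¬ G.Adj x y) : ¬ G.Adj x y ∧ ¬ G.Adj y x :=
    ⟨hxy, fun h => hxy h.symm⟩
  refine ⟨insert s (insert u (range b)), ?_, ?_, ?_⟩
  · simp only [Set.insert_subset_iff, Set.range_subset_iff]
    exact ⟨hsS, huS, hbS⟩
  · simp only [Set.pairwise_insert, Set.mem_insert_iff, Set.mem_range]
    refine ⟨⟨Pairwise.range_pairwise fun i j hij => (hpair hij).2, ?_⟩, ?_⟩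
    · rintro _ ⟨i, rfl⟩ -
      exact hsymm (h.not_adj_head?_of_isFanPath hL hs (hdec i) (hM i) (hF i) hu)
    · rintro _ (rfl | ⟨i, rfl⟩) -
      · exact hsymm (h.not_adj_of_head? hL hs hu)
      · exact hsymm (h.not_adj_of_isFanPath hL hs (hdec i) (hM i) (hF i))
  · have hb : Function.Injective b := fun i j hij => by_contra fun hne => (hpair hne).1 hij
    rw [Set.ncard_insert_of_notMem, Set.ncard_insert_of_notMem, Set.ncard_range_of_injective hb]
    · rintro ⟨i, hi⟩
      exact hub i hi.symm
    · rintro (rfl | ⟨i, rfl⟩)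
      exacts [hs huL, hs (hbL i)]

end CannotAbsorb

theorem exists_internallyDisjoint_ncard_eq_localConn [Finite V] (G : SimpleGraph V) (x y : V) :
    ∃ P : Set (G.Path x y), P.Pairwise (fun p q => InternallyDisjoint G p.1 q.1) ∧
      P.ncard = localConn G x y := by
  classical
  have : Fintype V := Fintype.ofFinite V
  refine Nat.sSup_mem (s := {n | ∃ P : Set (G.Path x y),
    P.Pairwise (fun p q => InternallyDisjoint G p.1 q.1) ∧ P.ncard = n}) ⟨0, ∅, by simp⟩
    ⟨Nat.card (G.Path x y), ?_⟩
  rintro n ⟨P, -, rfl⟩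
  exact Set.ncard_le_card P

theorem ncard_le_indepNumOn [Finite V] {S I : Set V} (hIS : I ⊆ S)
    (hI : I.Pairwise fun x y => ¬ G.Adj x y) : I.ncard ≤ indepNumOn G S :=
  le_csSup ⟨Nat.card V, by rintro n ⟨J, -, -, rfl⟩; exact Set.ncard_le_card J⟩ ⟨I, hIS, hI, rfl⟩

theorem setConn_le_localConn {S : Set V} {x y : V} (hx : x ∈ S) (hy : y ∈ S) (hxy : x ≠ y) :
    setConn G S ≤ localConn G x y :=
  (iInf₂_le x hx).trans <| (iInf₂_le y hy).trans <| iInf_le _ hxy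

theorem CannotAbsorb.localConn_add_two_le [Finite V] {S : Set V} {L : List V} {s u t : V}
    (h : CannotAbsorb G S L s) (hL : G.IsPathList L) (hs : s ∉ L) (hsS : s ∈ S)
    (hu : L.head? = some u) (huS : u ∈ S) (ht : L.getLast? = some t) (htS : t ∈ S) :
    localConn G s t + 2 ≤ indepNumOn G S := by
  classical
  have : Fintype V := Fintype.ofFinite V
  have htL : t ∈ L := List.mem_of_mem_getLast? ht
  obtain ⟨Q, hQ, hQcard⟩ := exists_internallyDisjoint_ncard_eq_localConn G s t
  choose P a R hsupp hF using fun q : Q => q.1.2.exists_isFanPath hs htL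
  have hcommon {q q' : Q} (hqq' : q ≠ q') {x : V} (hx : x ∈ P q ++ a q :: R q)
      (hx' : x ∈ P q' ++ a q' :: R q') : x = s ∨ x = t :=
    hQ q.2 q'.2 (Subtype.coe_ne_coe.2 hqq') x (by simp [hsupp, hx]) (by simp [hsupp, hx'])
  have hP : Pairwise fun q q' => (P q).Disjoint (P q') := by
    intro q q' hqq' x hx hx'
    have hsP := (List.nodup_cons.1 (hF q).isPathList.2).1
    rcases hcommon hqq' (x := x) (by simp [hx]) (by simp [hx']) with rfl | rfl
    · exact hsP (List.mem_append_left _ hx)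
    · exact (hF q).disjoint hx htL
  have ha : Function.Injective a := by
    intro q q' haa'
    by_contra hqq'
    rcases hcommon hqq' (x := a q) (by simp) (by simp [haa']) with hs' | hat
    · exact hs (hs' ▸ (hF q).mem)
    · exact h.not_mem_getLast? hL hs (hF q) (hat ▸ ht)
  obtain ⟨I, hIS, hI, hIcard⟩ := h.exists_indep_ncard_eq hL hs hsS hu huS ht htS hF hP ha
  rw [Nat.card_coe_set_eq, hQcard] at hIcard
  exact hIcard ▸ ncard_le_indepNumOn hIS hI

end SimpleGraph

/-- If `G` is connected and `α_G(S) ≤ κ_G(S) + 1`, then `G` has a path covering `S`. -/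
theorem stmt_14 [Fintype V] (G : SimpleGraph V) (hG : G.Connected)
    (S : Set V) (hακ : (indepNumOn G S : ℕ∞) ≤ setConn G S + 1) :
    ∃ (u v : V) (p : G.Walk u v), p.IsPath ∧ S ⊆ {x | x ∈ p.support} := by
  obtain ⟨L, hL, hmax⟩ := G.exists_isPathList_cannotAbsorb S
  by_cases hcov : ∀ x ∈ S, x ∈ L
  · have := hG.nonempty
    exact hL.exists_isPath_subset_support hcov
  obtain ⟨s, hsS, hsL⟩ := not_forall₂.1 hcov
  have h := hmax s hsS hsL
  have hSL : ∃ x ∈ L, x ∈ S := by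
    by_contra! hSL
    exact h [s] ⟨.singleton s, List.nodup_singleton s⟩ (fun x hx hxS => absurd hxS (hSL x hx))
      (List.mem_singleton_self s)
  obtain ⟨L', hL'L, ⟨u, huS, hu⟩, ⟨t, htS, ht⟩, hcov'⟩ := List.exists_infix_head?_getLast?_mem hSL
  have hsL' : s ∉ L' := fun hs => hsL (hL'L.subset hs)
  have hst : s ≠ t := fun hst => hsL' (hst ▸ List.mem_of_mem_getLast? ht)
  have hlower := (h.mono hcov').localConn_add_two_le (hL.of_infix hL'L) hsL' hsS hu huS ht htS
  have hupper : (indepNumOn G S : ℕ∞) ≤ localConn G s t + 1 :=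
    hακ.trans (by gcongr; exact setConn_le_localConn hsS htS hst)
  norm_cast at hupper
  omega
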